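/- Let 1/3 < d_x < 1/2 and 1/3 < d_ε < 1/2. There exists a constant C (depending only on d_x, d_ε) such that for all integers n ≥ M ≥ 1: n^{−1} Σ_{p=−M}^{M} Σ_{q=−M}^{M} Σ_{r=−n+1}^{n−1} (|r|+1)^{2(2d_x−1)} (|r+q−p|+1)^{2(2d_ε−1)} (|r−p|+1)^{d_x+d_ε−1} (|r+q|+1)^{d_x+d_ε−1} ≤ C ( M^{4d_x+4d_ε−1} n^{−1} + M^{4d_x+4d_ε−2} n^{2d_x+2d_ε−2} ). -/

import Mathlib

/-!
Write `α = 2(2d_x - 1)`, `β = 2(2d_ε - 1)`, `γ = d_x + d_ε - 1` and split the `r`-sum at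
`|r| = 4M`. A sum of `(|k| + 1) ^ a` over any `L` integers is at most `2 L ^ (a + 1) / (a + 1)`,
the worst case being the `L` lags closest to zero. For `|r| < 4M` the factor at lag `r - p` is at
most one, and the other three factors are summed successively over `p`, `q`, `r`, which gives
`M ^ (α + β + γ + 3) ≤ M ^ (4d_x + 4d_ε - 1)`. For `|r| ≥ 4M` all four lags are at least half of
`|r|`, so the summand is at most `8 (|r| + 1) ^ (α + β + 2γ) ≤ 8 M ^ (α + β) (|r| + 1) ^ (2γ)`;
summing over `p`, `q` and `|r| < n` gives `M ^ (α + β + 2) n ^ (2γ + 1)`.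
-/

open Finset Real

section Rearrangement

variable {β : Type*} [AddCommMonoid β] [PartialOrder β] [IsOrderedAddMonoid β] {φ : ℕ → β}

theorem Antitone.sum_le_sum_range_card (hφ : Antitone φ) (T : Finset ℕ) :
    ∑ t ∈ T, φ t ≤ ∑ j ∈ range #T, φ j := by
  induction T using Finset.induction_on_max with
  | empty => simp
  | insert t s hlt ih =>
    have ht : t ∉ s := fun h => (hlt t h).false
    have hcard : #s ≤ t := by
      simpa using card_le_card fun x hx => mem_range.2 (hlt x hx)
    rw [sum_insert ht, card_insert_of_notMem ht, sum_range_succ, add_comm]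
    exact add_le_add ih (hφ hcard)

theorem Antitone.sum_natAbs_le (hφ : Antitone φ) (hφ0 : 0 ≤ φ) (S : Finset ℤ) :
    ∑ k ∈ S, φ k.natAbs ≤ 2 • ∑ j ∈ range #S, φ j := by
  have hpart : ∀ P ⊆ S, Set.InjOn Int.natAbs P →
      ∑ k ∈ P, φ k.natAbs ≤ ∑ j ∈ range #S, φ j := by
    intro P hPS hinj
    rw [← sum_image hinj]
    refine (hφ.sum_le_sum_range_card _).trans
      (sum_le_sum_of_subset_of_nonneg ?_ fun j _ _ => hφ0 j)
    exact range_subset_range.2 (card_image_le.trans (card_le_card hPS))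
  rw [← sum_filter_add_sum_filter_not S (0 ≤ ·), two_nsmul]
  refine add_le_add (hpart _ (filter_subset _ _) ?_) (hpart _ (filter_subset _ _) ?_) <;>
    intro x hx y hy hxy <;> simp only [coe_filter, Set.mem_ofPred_eq] at hx hy <;> omega

end Rearrangement

theorem Real.mul_add_one_rpow_le_add_one_rpow_sub_rpow {a x : ℝ} (ha : -1 ≤ a) (ha0 : a ≤ 0)
    (hx : 0 ≤ x) : (a + 1) * (x + 1) ^ a ≤ (x + 1) ^ (a + 1) - x ^ (a + 1) := by
  have hx1 : 0 < x + 1 := by linarith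
  have hbern := rpow_one_add_le_one_add_mul_self (s := -(x + 1)⁻¹) (p := a + 1)
    (by rw [neg_le_neg_iff]; exact inv_le_one_of_one_le₀ (by linarith)) (by linarith) (by linarith)
  rw [show 1 + -(x + 1)⁻¹ = x / (x + 1) by field_simp; ring, div_rpow hx hx1.le,
    div_le_iff₀ (rpow_pos_of_pos hx1 _), rpow_add_one hx1.ne'] at hbern
  rw [rpow_add_one hx1.ne']
  have : (x + 1) ^ a * (x + 1) * (x + 1)⁻¹ = (x + 1) ^ a := by field_simp
  nlinarith

theorem Real.sum_range_add_one_rpow_le {a : ℝ} (ha : -1 < a) (ha0 : a ≤ 0) (N : ℕ) :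
    ∑ j ∈ range N, ((j : ℝ) + 1) ^ a ≤ (N : ℝ) ^ (a + 1) / (a + 1) := by
  have ha1 : 0 < a + 1 := by linarith
  rw [le_div_iff₀ ha1, sum_mul]
  calc ∑ j ∈ range N, ((j : ℝ) + 1) ^ a * (a + 1)
      ≤ ∑ j ∈ range N, (((j + 1 : ℕ) : ℝ) ^ (a + 1) - ((j : ℕ) : ℝ) ^ (a + 1)) := by
        gcongr with j
        push_cast
        rw [mul_comm]
        exact mul_add_one_rpow_le_add_one_rpow_sub_rpow ha.le ha0 j.cast_nonneg
    _ = (N : ℝ) ^ (a + 1) := by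
        rw [sum_range_sub (fun j : ℕ => (j : ℝ) ^ (a + 1))]
        simp [zero_rpow ha1.ne']

noncomputable def decayWeight (a : ℝ) (k : ℤ) : ℝ := ((|k| : ℝ) + 1) ^ a

section DecayWeight

variable {a b : ℝ}

theorem decayWeight_pos (a : ℝ) (k : ℤ) : 0 < decayWeight a k := by
  unfold decayWeight; positivity

theorem decayWeight_le_one (ha : a ≤ 0) (k : ℤ) : decayWeight a k ≤ 1 :=
  rpow_le_one_of_one_le_of_nonpos (by simp) ha

theorem decayWeight_mul_decayWeight (k : ℤ) :
    decayWeight a k * decayWeight b k = decayWeight (a + b) k :=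
  (rpow_add (by positivity) a b).symm

theorem decayWeight_le_rpow (ha : a ≤ 0) {m : ℝ} (hm : 0 < m) {k : ℤ}
    (hk : m ≤ |(k : ℝ)| + 1) : decayWeight a k ≤ m ^ a :=
  rpow_le_rpow_of_nonpos hm hk ha

theorem decayWeight_le_two_mul (ha : -1 ≤ a) (ha0 : a ≤ 0) {j k : ℤ}
    (h : |k| + 1 ≤ 2 * (|j| + 1)) : decayWeight a j ≤ 2 * decayWeight a k := by
  have hk : 0 < |(k : ℝ)| + 1 := by positivity
  have h' : (|(k : ℝ)| + 1) / 2 ≤ |(j : ℝ)| + 1 := by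
    rw [div_le_iff₀ two_pos, ← Int.cast_abs, ← Int.cast_abs]
    exact_mod_cast (by linarith : |k| + 1 ≤ (|j| + 1) * 2)
  calc decayWeight a j ≤ ((|(k : ℝ)| + 1) / 2) ^ a := rpow_le_rpow_of_nonpos (by positivity) h' ha0
    _ = 2 ^ (-a) * decayWeight a k := by
        rw [div_rpow hk.le zero_le_two, rpow_neg zero_le_two, decayWeight]; ring
    _ ≤ 2 * decayWeight a k :=
        mul_le_mul_of_nonneg_right (rpow_le_self_of_one_le one_le_two (by linarith))
          (decayWeight_pos a k).le

theorem sum_decayWeight_le (ha : -1 < a) (ha0 : a ≤ 0) (S : Finset ℤ) :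
    ∑ k ∈ S, decayWeight a k ≤ 2 / (a + 1) * (#S : ℝ) ^ (a + 1) := by
  have hφ : Antitone fun j : ℕ => ((j : ℝ) + 1) ^ a := fun i j hij =>
    rpow_le_rpow_of_nonpos (by positivity) (by gcongr) ha0
  calc ∑ k ∈ S, decayWeight a k = ∑ k ∈ S, ((k.natAbs : ℝ) + 1) ^ a := by
        simp [decayWeight, Nat.cast_natAbs]
    _ ≤ 2 • ∑ j ∈ range #S, ((j : ℝ) + 1) ^ a := hφ.sum_natAbs_le (fun j => by positivity) S
    _ ≤ 2 * ((#S : ℝ) ^ (a + 1) / (a + 1)) := by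
        rw [two_nsmul, ← two_mul]; gcongr; exact sum_range_add_one_rpow_le ha ha0 _
    _ = 2 / (a + 1) * (#S : ℝ) ^ (a + 1) := by ring

theorem sum_decayWeight_comp_le_of_card_le {ι : Type*} (ha : -1 < a) (ha0 : a ≤ 0)
    {S : Finset ι} {f : ι → ℤ} (hf : Set.InjOn f S) {c m : ℝ} (hc : 1 ≤ c) (hm : 0 ≤ m)
    (hS : #S ≤ c * m) :
    ∑ x ∈ S, decayWeight a (f x) ≤ 2 / (a + 1) * c * m ^ (a + 1) := by
  have ha1 : 0 < a + 1 := by linarith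
  rw [← sum_image (f := decayWeight a) hf, mul_assoc]
  refine (sum_decayWeight_le ha ha0 _).trans ?_
  gcongr
  calc (#(S.image f) : ℝ) ^ (a + 1) ≤ (c * m) ^ (a + 1) := by
        gcongr; exact (Nat.cast_le.2 card_image_le).trans hS
    _ = c ^ (a + 1) * m ^ (a + 1) := mul_rpow (by linarith) hm
    _ ≤ c * m ^ (a + 1) := by gcongr; exact rpow_le_self_of_one_le hc (by linarith)

end DecayWeight

/-- The Figure 2 summand `γ_xx²(r) γ_εε²(r+q-p) γ_εx(r-p) γ_xε(r+q)` with each covariance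
replaced by its decay bound; `α`, `β`, `γ` are the exponents of `γ_xx²`, `γ_εε²`, `γ_xε`. -/
noncomputable def figure2Term (α β γ : ℝ) (p q r : ℤ) : ℝ :=
  decayWeight α r * decayWeight β (r + q - p) * decayWeight γ (r - p) * decayWeight γ (r + q)

theorem card_Icc_neg_self {N : ℤ} (hN : 0 ≤ N) : (#(Icc (-N) N) : ℝ) = 2 * N + 1 := by
  have h : ((#(Icc (-N) N) : ℕ) : ℤ) = 2 * N + 1 := by rw [Int.card_Icc]; omega
  exact_mod_cast h

section Figure2

variable {α β γ : ℝ}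

theorem sum_figure2Term_near_le (hα : -1 < α) (hα0 : α ≤ 0) (hβ : -1 < β) (hβ0 : β ≤ 0)
    (hγ : -1 < γ) (hγ0 : γ ≤ 0) {M : ℕ} (hM : 1 ≤ M) {R : Finset ℤ}
    (hR : R ⊆ Icc (-(4 * M : ℤ)) (4 * M)) :
    ∑ r ∈ R, ∑ q ∈ Icc (-(M : ℤ)) M, ∑ p ∈ Icc (-(M : ℤ)) M, figure2Term α β γ p q r ≤
      2 / (α + 1) * 9 * (2 / (γ + 1) * 3 * (2 / (β + 1) * 3)) *
        (M : ℝ) ^ (α + β + γ + 3) := by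
  set I := Icc (-(M : ℤ)) M
  have hM0 : (0 : ℝ) < M := by exact_mod_cast hM
  have hM1 : (1 : ℝ) ≤ M := by exact_mod_cast hM
  have hI : (#I : ℝ) ≤ 3 * M := by
    rw [card_Icc_neg_self (by positivity)]; push_cast; linarith
  have hRcard : (#R : ℝ) ≤ 9 * M := by
    refine (Nat.cast_le.2 (card_le_card hR)).trans ?_
    rw [card_Icc_neg_self (by positivity)]; push_cast; linarith
  have hwin : ∀ {a : ℝ}, -1 < a → 0 ≤ 2 / (a + 1) * 3 * (M : ℝ) ^ (a + 1) := fun ha =>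
    mul_nonneg (mul_nonneg (div_nonneg zero_le_two (by linarith)) (by norm_num)) (by positivity)
  calc ∑ r ∈ R, ∑ q ∈ I, ∑ p ∈ I, figure2Term α β γ p q r
      ≤ ∑ r ∈ R, decayWeight α r *
          ∑ q ∈ I, decayWeight γ (r + q) * ∑ p ∈ I, decayWeight β (r + q - p) := by
        simp_rw [mul_sum]
        gcongr with r _ q _ p _
        have := mul_le_mul_of_nonneg_left (decayWeight_le_one hγ0 (r - p))
          (mul_nonneg (decayWeight_pos α r).le (decayWeight_pos β (r + q - p)).le)
        unfold figure2Term
        nlinarith [decayWeight_pos γ (r + q)]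
    _ ≤ ∑ r ∈ R, decayWeight α r *
          ∑ q ∈ I, decayWeight γ (r + q) * (2 / (β + 1) * 3 * (M : ℝ) ^ (β + 1)) := by
        refine sum_le_sum fun r _ => mul_le_mul_of_nonneg_left
          (sum_le_sum fun q _ => mul_le_mul_of_nonneg_left ?_ (decayWeight_pos γ _).le)
          (decayWeight_pos α r).le
        exact sum_decayWeight_comp_le_of_card_le hβ hβ0
          (fun _ _ _ _ h => by simpa using h) (by norm_num) hM0.le hI
    _ ≤ ∑ r ∈ R, decayWeight α r *
          (2 / (γ + 1) * 3 * (M : ℝ) ^ (γ + 1) * (2 / (β + 1) * 3 * (M : ℝ) ^ (β + 1))) := by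
        refine sum_le_sum fun r _ => mul_le_mul_of_nonneg_left ?_ (decayWeight_pos α r).le
        rw [← sum_mul]
        exact mul_le_mul_of_nonneg_right (sum_decayWeight_comp_le_of_card_le hγ hγ0
          (fun _ _ _ _ h => by simpa using h) (by norm_num) hM0.le hI) (hwin hβ)
    _ ≤ 2 / (α + 1) * 9 * (M : ℝ) ^ (α + 1) *
          (2 / (γ + 1) * 3 * (M : ℝ) ^ (γ + 1) * (2 / (β + 1) * 3 * (M : ℝ) ^ (β + 1))) := by
        rw [← sum_mul]
        exact mul_le_mul_of_nonneg_right (sum_decayWeight_comp_le_of_card_le (f := id) hα hα0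
          (Set.injOn_id _) (by norm_num) hM0.le hRcard) (mul_nonneg (hwin hγ) (hwin hβ))
    _ = _ := by
        have h : (M : ℝ) ^ (α + β + γ + 3) = M ^ (α + 1) * M ^ (γ + 1) * M ^ (β + 1) := by
          rw [← rpow_add hM0, ← rpow_add hM0]; ring_nf
        rw [h]; ring

theorem figure2Term_le_of_far (hα0 : α ≤ 0) (hβ : -1 ≤ β) (hβ0 : β ≤ 0) (hγ : -1 ≤ γ)
    (hγ0 : γ ≤ 0) {M : ℕ} (hM : 1 ≤ M) {p q r : ℤ} (hr : 4 * M ≤ |r|) (hp : |p| ≤ M)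
    (hq : |q| ≤ M) :
    figure2Term α β γ p q r ≤ 8 * (M : ℝ) ^ (α + β) * decayWeight (2 * γ) r := by
  rw [abs_le] at hp hq
  have hrqp : |r| + 1 ≤ 2 * (|r + q - p| + 1) := by
    rcases abs_cases r with h | h <;> rcases abs_cases (r + q - p) with h' | h' <;> omega
  have hrp : |r| + 1 ≤ 2 * (|r - p| + 1) := by
    rcases abs_cases r with h | h <;> rcases abs_cases (r - p) with h' | h' <;> omega
  have hrq : |r| + 1 ≤ 2 * (|r + q| + 1) := by
    rcases abs_cases r with h | h <;> rcases abs_cases (r + q) with h' | h' <;> omega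
  have hMr : (M : ℝ) ≤ |(r : ℝ)| + 1 := by
    rw [← Int.cast_abs]; exact_mod_cast (by omega : (M : ℤ) ≤ |r| + 1)
  have h₁ := decayWeight_le_two_mul hβ hβ0 hrqp
  have h₂ := decayWeight_le_two_mul hγ hγ0 hrp
  have h₃ := decayWeight_le_two_mul hγ hγ0 hrq
  calc figure2Term α β γ p q r
      ≤ decayWeight α r * (2 * decayWeight β r) * (2 * decayWeight γ r) *
          (2 * decayWeight γ r) := by
        unfold decayWeight at h₁ h₂ h₃
        unfold figure2Term decayWeight
        gcongr
    _ = 8 * decayWeight (α + β) r * decayWeight (2 * γ) r := by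
        rw [two_mul γ, ← decayWeight_mul_decayWeight, ← decayWeight_mul_decayWeight]; ring
    _ ≤ 8 * (M : ℝ) ^ (α + β) * decayWeight (2 * γ) r := by
        gcongr
        exacts [(decayWeight_pos _ _).le, decayWeight_le_rpow (by linarith) (by exact_mod_cast hM) hMr]

theorem sum_figure2Term_far_le (hα0 : α ≤ 0) (hβ : -1 ≤ β) (hβ0 : β ≤ 0) (hγ : -1 < 2 * γ)
    (hγ0 : γ ≤ 0) {n M : ℕ} (hM : 1 ≤ M) {R : Finset ℤ} (hR : R ⊆ Icc (-n + 1) (n - 1))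
    (hfar : ∀ r ∈ R, 4 * M ≤ |r|) :
    ∑ r ∈ R, ∑ q ∈ Icc (-(M : ℤ)) M, ∑ p ∈ Icc (-(M : ℤ)) M, figure2Term α β γ p q r ≤
      72 * (2 / (2 * γ + 1) * 2) * (M : ℝ) ^ (α + β + 2) * (n : ℝ) ^ (2 * γ + 1) := by
  set I := Icc (-(M : ℤ)) M
  have hM0 : (0 : ℝ) < M := by exact_mod_cast hM
  have hI : (#I : ℝ) ≤ 3 * M := by
    rw [card_Icc_neg_self (by positivity)]; push_cast; linarith [(Nat.one_le_cast (α := ℝ)).2 hM]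
  have hRcard : (#R : ℝ) ≤ 2 * n := by
    have h : ((#(Icc (-n + 1 : ℤ) (n - 1)) : ℕ) : ℤ) ≤ 2 * n := by rw [Int.card_Icc]; omega
    exact (Nat.cast_le.2 (card_le_card hR)).trans (by exact_mod_cast h)
  have hsum := sum_decayWeight_comp_le_of_card_le (f := id) hγ (by linarith)
    (Set.injOn_id _) one_le_two (Nat.cast_nonneg n) hRcard
  calc ∑ r ∈ R, ∑ q ∈ I, ∑ p ∈ I, figure2Term α β γ p q r
      ≤ ∑ r ∈ R, ∑ q ∈ I, ∑ p ∈ I, 8 * (M : ℝ) ^ (α + β) * decayWeight (2 * γ) r := by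
        gcongr with r hr q hq p hp
        exact figure2Term_le_of_far hα0 hβ hβ0 (by linarith) hγ0 hM (hfar r hr)
          (abs_le.2 (mem_Icc.1 hp)) (abs_le.2 (mem_Icc.1 hq))
    _ = #I * #I * (8 * (M : ℝ) ^ (α + β)) * ∑ r ∈ R, decayWeight (2 * γ) r := by
        simp only [sum_const, nsmul_eq_mul, mul_sum]
        exact sum_congr rfl fun r _ => by ring
    _ ≤ 3 * M * (3 * M) * (8 * (M : ℝ) ^ (α + β)) *
          (2 / (2 * γ + 1) * 2 * (n : ℝ) ^ (2 * γ + 1)) :=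
        mul_le_mul (by gcongr) hsum (sum_nonneg fun r _ => (decayWeight_pos _ r).le)
          (by positivity)
    _ = _ := by
        rw [rpow_add hM0 (α + β) 2, rpow_two]; ring

theorem exists_figure2_sum_le (hα : -1 < α) (hα0 : α ≤ 0) (hβ : -1 < β) (hβ0 : β ≤ 0)
    (hγ : -1 < 2 * γ) (hγ0 : γ ≤ 0) :
    ∃ C : ℝ, 0 < C ∧ ∀ n M : ℕ, 1 ≤ M → M ≤ n →
      (n : ℝ)⁻¹ * ∑ p ∈ Icc (-(M : ℤ)) M, ∑ q ∈ Icc (-(M : ℤ)) M,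
          ∑ r ∈ Icc (-(n : ℤ) + 1) (n - 1), figure2Term α β γ p q r ≤
        C * ((M : ℝ) ^ (α + β + 3) * (n : ℝ)⁻¹ + (M : ℝ) ^ (α + β + 2) * (n : ℝ) ^ (2 * γ)) := by
  have hK : ∀ {a : ℝ}, -1 < a → 0 < 2 / (a + 1) := fun ha => div_pos two_pos (by linarith)
  set A := 2 / (α + 1) * 9 * (2 / (γ + 1) * 3 * (2 / (β + 1) * 3))
  set B := 72 * (2 / (2 * γ + 1) * 2)
  have hA : 0 < A := by
    have := hK hα; have := hK hβ; have := hK (show -1 < γ by linarith); positivity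
  have hB : 0 < B := by have := hK hγ; positivity
  refine ⟨A + B, by positivity, fun n M hM hMn => ?_⟩
  set J := Icc (-(n : ℤ) + 1) (n - 1)
  have hn0 : (0 : ℝ) < n := by exact_mod_cast hM.trans hMn
  have hnear := sum_figure2Term_near_le hα hα0 hβ hβ0 (by linarith) hγ0 hM
    (R := J.filter (|·| < 4 * M)) fun r hr => by
      have := (mem_filter.1 hr).2; rw [mem_Icc, ← abs_le]; exact this.le
  have hfar := sum_figure2Term_far_le hα0 hβ.le hβ0 hγ hγ0 (n := n) hM
    (R := J.filter fun r => ¬ |r| < 4 * M) (filter_subset _ _) fun r hr =>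
      not_lt.1 (mem_filter.1 hr).2
  have hMpow : (M : ℝ) ^ (α + β + γ + 3) ≤ (M : ℝ) ^ (α + β + 3) :=
    rpow_le_rpow_of_exponent_le (by exact_mod_cast hM) (by linarith)
  rw [sum_comm, sum_congr rfl fun q _ => sum_comm, sum_comm,
    ← sum_filter_add_sum_filter_not J (|·| < 4 * M)]
  calc (n : ℝ)⁻¹ * (_ + _)
      ≤ (n : ℝ)⁻¹ * (A * (M : ℝ) ^ (α + β + 3) +
          B * (M : ℝ) ^ (α + β + 2) * (n : ℝ) ^ (2 * γ + 1)) := by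
        gcongr
        linarith [mul_le_mul_of_nonneg_left hMpow hA.le]
    _ = A * ((M : ℝ) ^ (α + β + 3) * (n : ℝ)⁻¹) + B * ((M : ℝ) ^ (α + β + 2) * n ^ (2 * γ)) := by
        rw [rpow_add_one hn0.ne']; field_simp
    _ ≤ _ := by
        have : 0 ≤ (M : ℝ) ^ (α + β + 3) * (n : ℝ)⁻¹ := by positivity
        have : 0 ≤ (M : ℝ) ^ (α + β + 2) * (n : ℝ) ^ (2 * γ) := by positivity
        nlinarith

end Figure2

/-- the bound for the connected-diagram term
`γ_xx²(r)γ_εε²(r+q-p)γ_εx(r-p)γ_xε(r+q)` (Figure 2) in Part III of the proof of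
Lemma 1, for `1/3 < d_x, d_ε < 1/2`. -/
theorem figure2_diagram_bound (dx dε : ℝ)
    (hdx1 : 1 / 3 < dx) (hdx2 : dx < 1 / 2) (hdε1 : 1 / 3 < dε) (hdε2 : dε < 1 / 2) :
    ∃ C : ℝ, 0 < C ∧ ∀ n M : ℕ, 1 ≤ M → M ≤ n →
      (n : ℝ)⁻¹ *
          ∑ p ∈ Finset.Icc (-(M : ℤ)) (M : ℤ),
            ∑ q ∈ Finset.Icc (-(M : ℤ)) (M : ℤ),
              ∑ r ∈ Finset.Icc (-(n : ℤ) + 1) ((n : ℤ) - 1),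
                ((|r| : ℝ) + 1) ^ (2 * (2 * dx - 1)) *
                  ((|r + q - p| : ℝ) + 1) ^ (2 * (2 * dε - 1)) *
                  ((|r - p| : ℝ) + 1) ^ (dx + dε - 1) *
                  ((|r + q| : ℝ) + 1) ^ (dx + dε - 1)
        ≤ C * ((M : ℝ) ^ (4 * dx + 4 * dε - 1) * (n : ℝ)⁻¹ +
            (M : ℝ) ^ (4 * dx + 4 * dε - 2) * (n : ℝ) ^ (2 * dx + 2 * dε - 2)) := by
  obtain ⟨C, hC, hbound⟩ := exists_figure2_sum_le (α := 2 * (2 * dx - 1))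
    (β := 2 * (2 * dε - 1)) (γ := dx + dε - 1) (by linarith) (by linarith) (by linarith)
    (by linarith) (by linarith) (by linarith)
  refine ⟨C, hC, fun n M hM hMn => ?_⟩
  have h := hbound n M hM hMn
  rw [show 2 * (2 * dx - 1) + 2 * (2 * dε - 1) + 3 = 4 * dx + 4 * dε - 1 by ring,
    show 2 * (2 * dx - 1) + 2 * (2 * dε - 1) + 2 = 4 * dx + 4 * dε - 2 by ring,
    show 2 * (dx + dε - 1) = 2 * dx + 2 * dε - 2 by ring] at h
  simpa only [figure2Term, decayWeight, Int.cast_add, Int.cast_sub] using h
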